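/- arXiv:1705.02391 — 3 statements merged into one kernel-verified Lean document; each statement's English description precedes it below -/
import Mathlib

section
/- Let α, β be reals with α + β > 0, let k ≥ 1, let n₁, …, n_k be nonnegative reals, and let N = Σᵢ nᵢ. Define, for a real n, the map G_n(t) = (t+1)/(α+β+n), whose inverse is G_n^{-1}(p) = (α+β+n)p − 1. Set wᵢ = (α+β+nᵢ)/(α+β+N). Then for all reals p₀, p₁, …, p_k: G_N( −(k−1)·G_0^{-1}(p₀) + Σᵢ G_{nᵢ}^{-1}(pᵢ) ) = (1 − Σᵢ wᵢ)·p₀ + Σᵢ wᵢ·pᵢ. -/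
/-!
In the beta/Bernoulli family both `Gₙ` and `Gₙ⁻¹` are affine, so the ensemble is an affine
function of `p₀, p₁, …, p_k`. The `-1` shifts of the `k` experts and the `-(k-1)` copies of the
prior cancel against the `+1` of `G_N`, and what remains is a linear combination whose
coefficients sum to one exactly because `N = Σᵢ nᵢ`.
-/

open Finset

variable {K ι : Type*} [Field K] [Fintype ι]

namespace BetaBernoulli

/-- `Gₙ`, with `c = α + β` the concentration of the beta prior. -/
def predictive (c n t : K) : K := (t + 1) / (c + n)

def predictiveInv (c n p : K) : K := (c + n) * p - 1

def ensemble (c : K) (n : ι → K) (p₀ : K) (p : ι → K) : K :=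
  predictive c (∑ i, n i)
    (-((Fintype.card ι : K) - 1) * predictiveInv c 0 p₀ + ∑ i, predictiveInv c (n i) (p i))

def linearPool (w : ι → K) (p₀ : K) (p : ι → K) : K :=
  (1 - ∑ i, w i) * p₀ + ∑ i, w i * p i

theorem ensemble_numerator (c : K) (n : ι → K) (p₀ : K) (p : ι → K) :
    -((Fintype.card ι : K) - 1) * predictiveInv c 0 p₀ + ∑ i, predictiveInv c (n i) (p i) + 1
      = -((Fintype.card ι : K) - 1) * c * p₀ + ∑ i, (c + n i) * p i := by
  simp only [predictiveInv, sum_sub_distrib, sum_const, card_univ, nsmul_eq_mul, mul_one]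
  ring

theorem one_sub_sum_weights {c : K} (n : ι → K) (hc : c + ∑ i, n i ≠ 0) :
    1 - ∑ i, (c + n i) / (c + ∑ i, n i) = -((Fintype.card ι : K) - 1) * c / (c + ∑ i, n i) := by
  rw [← sum_div, sum_add_distrib, sum_const, card_univ, nsmul_eq_mul]
  field_simp
  ring

theorem ensemble_eq_linearPool {c : K} (n : ι → K) (hc : c + ∑ i, n i ≠ 0) (p₀ : K)
    (p : ι → K) :
    ensemble c n p₀ p = linearPool (fun i ↦ (c + n i) / (c + ∑ i, n i)) p₀ p := by
  rw [ensemble, predictive, ensemble_numerator, linearPool, one_sub_sum_weights n hc,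
    add_div, div_mul_eq_mul_div, sum_div]
  simp only [div_mul_eq_mul_div]

end BetaBernoulli

theorem stmt_4_general (α β : ℝ) (hαβ : 0 < α + β) (k : ℕ)
    (n : Fin k → ℝ) (hn : ∀ i, 0 ≤ n i) (N : ℝ) (hN : N = ∑ i, n i)
    (p₀ : ℝ) (p : Fin k → ℝ) :
    ((-(((k : ℝ) - 1)) * ((α + β + 0) * p₀ - 1) + ∑ i, ((α + β + n i) * p i - 1)) + 1)
        / (α + β + N)
      = (1 - ∑ i, (α + β + n i) / (α + β + N)) * p₀
        + ∑ i, ((α + β + n i) / (α + β + N)) * p i := by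
  subst hN
  have hpos : 0 < α + β + ∑ i, n i := add_pos_of_pos_of_nonneg hαβ (sum_nonneg fun i _ ↦ hn i)
  have h := BetaBernoulli.ensemble_eq_linearPool n hpos.ne' p₀ p
  rw [BetaBernoulli.ensemble, BetaBernoulli.linearPool, Fintype.card_fin] at h
  exact h

/-- Example 1 (beta/Bernoulli ensemble): with `Gₙ(t) = (t+1)/(α+β+n)` and
`Gₙ⁻¹(p) = (α+β+n)p − 1`, the conjugate-pair Bayesian ensemble
`G_N(−(k−1)G₀⁻¹(p₀) + Σᵢ G_{nᵢ}⁻¹(pᵢ))` equals the linear pool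
`(1 − Σᵢ wᵢ)p₀ + Σᵢ wᵢ pᵢ` with `wᵢ = (α+β+nᵢ)/(α+β+N)`. -/
theorem stmt_4 (α β : ℝ) (hαβ : 0 < α + β) (k : ℕ) (hk : 1 ≤ k)
    (n : Fin k → ℝ) (hn : ∀ i, 0 ≤ n i) (N : ℝ) (hN : N = ∑ i, n i)
    (p₀ : ℝ) (p : Fin k → ℝ) :
    ((-(((k : ℝ) - 1)) * ((α + β + 0) * p₀ - 1) + ∑ i, ((α + β + n i) * p i - 1)) + 1)
        / (α + β + N)
      = (1 - ∑ i, (α + β + n i) / (α + β + N)) * p₀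
        + ∑ i, ((α + β + n i) / (α + β + N)) * p i :=
  stmt_4_general α β hαβ k n hn N hN p₀ p
end

section
/- Let k ≥ 2 be a natural number, let α, β be reals with α + β > 0, let n₁ > 0 be a real, and set w = (α+β+n₁)/(α+β+k·n₁). Let p₀, p̄ be reals and define p̂ = (1 − k·w)·p₀ + k·w·p̄. Then: (i) k·w > 1; (ii) if p̄ < p₀ then p̂ < p̄; and (iii) if p̄ > p₀ then p̂ > p̄. In particular the beta/Bernoulli ensemble with exchangeable experts always extremizes the average forecast: p̂ lies strictly farther from p₀ than p̄, on the same side of p₀. -/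
/-! Since `k (a + n) − (a + k n) = (k − 1) a > 0` for `a = α + β`, the weight `c = k w` exceeds `1`,
and `p̂ − p̄ = (c − 1)(p̄ − p₀)` then has the sign of `p̄ − p₀`. -/

theorem one_lt_mul_div_add_mul {a n k : ℝ} (ha : 0 < a) (hn : 0 < n) (hk : 1 < k) :
    1 < k * ((a + n) / (a + k * n)) := by
  have hden : 0 < a + k * n := by positivity
  rw [← mul_div_assoc, one_lt_div hden]
  nlinarith

theorem affine_combination_sub_eq (c p₀ p : ℝ) :
    (1 - c) * p₀ + c * p - p = (c - 1) * (p - p₀) := by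
  ring

theorem affine_combination_lt_of_lt {c p₀ p : ℝ} (hc : 1 < c) (hp : p < p₀) :
    (1 - c) * p₀ + c * p < p := by
  have h := mul_neg_of_pos_of_neg (sub_pos.2 hc) (sub_neg.2 hp)
  linarith [affine_combination_sub_eq c p₀ p]

theorem lt_affine_combination_of_lt {c p₀ p : ℝ} (hc : 1 < c) (hp : p₀ < p) :
    p < (1 - c) * p₀ + c * p := by
  have h := mul_pos (sub_pos.2 hc) (sub_pos.2 hp)
  linarith [affine_combination_sub_eq c p₀ p]

/-- With exchangeable experts, the beta/Bernoulli ensemble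
`p̂ = (1 − k·w)p₀ + k·w·p̄`, `w = (α+β+n₁)/(α+β+k·n₁)`, always extremizes the
average forecast: `k·w > 1`, and `p̂ < p̄` when `p̄ < p₀`, `p̂ > p̄` when `p̄ > p₀`. -/
theorem stmt_5 (k : ℕ) (hk : 2 ≤ k) (α β : ℝ) (hαβ : 0 < α + β)
    (n₁ : ℝ) (hn₁ : 0 < n₁) (w : ℝ) (hw : w = (α + β + n₁) / (α + β + k * n₁))
    (p₀ pbar phat : ℝ) (hphat : phat = (1 - k * w) * p₀ + k * w * pbar) :
    1 < k * w ∧ (pbar < p₀ → phat < pbar) ∧ (pbar > p₀ → phat > pbar) := by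
  have hk_one : (1 : ℝ) < k := by exact_mod_cast hk
  have hkw : 1 < (k : ℝ) * w := hw ▸ one_lt_mul_div_add_mul hαβ hn₁ hk_one
  subst hphat
  exact ⟨hkw, affine_combination_lt_of_lt hkw, lt_affine_combination_of_lt hkw⟩
end

section
/- Let Φ denote the cumulative distribution function of the standard normal distribution. For all reals L, c, M and all reals V ≥ 0 and v > 0: ∫_ℝ Φ( (L − c·s)/√v ) dγ_{M,V}(s) = Φ( (L − c·M)/√(c²·V + v) ), where γ_{M,V} is the Gaussian measure on ℝ with mean M and variance V. -/
/-!
If `S ∼ N(M, V)` and `Z ∼ N(0, v)` are independent, the integrand is `P(Z ≤ L - c s)` at `S = s`,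
so the integral is `P(c S + Z ≤ L)`. The law of `c S + Z` is the convolution
`N(c M, c² V) ∗ N(0, v) = N(c M, c² V + v)`, and standardising gives the right-hand side.
-/

open MeasureTheory ProbabilityTheory Set
open scoped NNReal

lemma MeasureTheory.Measure.conv_real_apply {M : Type*} [AddMonoid M] [MeasurableSpace M]
    [MeasurableAdd₂ M] (μ ν : Measure M) [IsFiniteMeasure μ] [IsFiniteMeasure ν] {s : Set M}
    (hs : MeasurableSet s) :
    (μ ∗ ν).real s = ∫ x, ν.real ((x + ·) ⁻¹' s) ∂μ := by
  have hint : Integrable (s.indicator (1 : M → ℝ)) (μ ∗ ν) :=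
    (integrable_const 1).indicator hs
  rw [← integral_indicator_one hs, integral_conv hint]
  congr with x
  rw [← integral_indicator_one (measurable_const_add x hs)]
  rfl

lemma gaussianReal_Iic_eq_gaussianReal_zero_one (m x : ℝ) {w : ℝ≥0} (hw : w ≠ 0) :
    gaussianReal m w (Iic x) = gaussianReal 0 1 (Iic ((x - m) / √w)) := by
  have hsqrt : 0 < √(w : ℝ) := Real.sqrt_pos.mpr (by positivity)
  have hstd : (gaussianReal m w).map (fun y ↦ (y - m) / √w) = gaussianReal 0 1 := by
    have : (fun y ↦ (y - m) / √w) = (· / √(w : ℝ)) ∘ (· - m) := rfl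
    rw [this, ← Measure.map_map (by fun_prop) (by fun_prop), gaussianReal_map_sub_const,
      gaussianReal_map_div_const, sub_self, zero_div]
    congr
    ext
    simp [Real.sq_sqrt w.coe_nonneg, hw]
  rw [← hstd, Measure.map_apply (by fun_prop) measurableSet_Iic]
  congr with y
  simp [div_le_div_iff_of_pos_right hsqrt]

lemma antitone_measureReal_Iic_sub (ν : Measure ℝ) [IsFiniteMeasure ν] (L : ℝ) :
    Antitone fun x ↦ ν.real (Iic (L - x)) :=
  fun _ _ hxy ↦ measureReal_mono (Iic_subset_Iic.mpr (by linarith))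

/-- Gaussian–Φ mixture identity (final step of Proposition 3):
`∫ Φ((L − c·s)/√v) dγ_{M,V}(s) = Φ((L − c·M)/√(c²·V + v))`, where `Φ` is the
standard normal cdf and `γ_{M,V}` the Gaussian measure with mean `M`,
variance `V`. -/
theorem stmt_9 (L c M : ℝ) (V : ℝ≥0) (v : ℝ≥0) (hv : 0 < v) :
    ∫ s, ((gaussianReal 0 1) (Set.Iic ((L - c * s) / Real.sqrt v))).toReal
        ∂(gaussianReal M V)
      = ((gaussianReal 0 1)
          (Set.Iic ((L - c * M) / Real.sqrt (c ^ 2 * V + v)))).toReal := by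
  set cV : ℝ≥0 := .mk (c ^ 2) (sq_nonneg c) * V
  have hcV : c ^ 2 * (V : ℝ) + v = ((cV + v : ℝ≥0) : ℝ) := rfl
  have hcdf : ∀ s, (gaussianReal 0 1 (Iic ((L - c * s) / √v))).toReal
      = (gaussianReal 0 v).real (Iic (L - c * s)) := fun s ↦ by
    rw [measureReal_def, gaussianReal_Iic_eq_gaussianReal_zero_one 0 _ hv.ne', sub_zero]
  have hmeas : Measurable fun x ↦ (gaussianReal 0 v).real (Iic (L - x)) :=
    (antitone_measureReal_Iic_sub _ L).measurable
  calc ∫ s, (gaussianReal 0 1 (Iic ((L - c * s) / √v))).toReal ∂gaussianReal M V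
      = ∫ x, (gaussianReal 0 v).real (Iic (L - x)) ∂(gaussianReal M V).map (c * ·) := by
        rw [integral_map (by fun_prop) hmeas.aestronglyMeasurable]
        simp_rw [hcdf]
    _ = (gaussianReal (c * M) cV ∗ gaussianReal 0 v).real (Iic L) := by
        rw [gaussianReal_map_const_mul, Measure.conv_real_apply _ _ measurableSet_Iic]
        congr with x
        congr with y
        simp [le_sub_iff_add_le']
    _ = _ := by
        rw [gaussianReal_conv_gaussianReal, add_zero, measureReal_def, hcV,
          gaussianReal_Iic_eq_gaussianReal_zero_one _ _ (by positivity)]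
end
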